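/- arXiv:2501.12091 — 3 statements merged into one kernel-verified Lean document; each statement's English description precedes it below -/
import Mathlib

section
/- Let S be a seminormal affine monoid with cone C. For any face D of C, the lattice M_D equals the intersection over all relatively unsaturated faces D' containing D of M_{D'} ∩ span(D). -/
noncomputable section


noncomputable section

def emb (d : ℕ) : (Fin d → ℤ) →+ (Fin d → ℝ) where
  toFun m := fun i => (m i : ℝ)
  map_zero' := by ext i; simp
  map_add' x y := by ext i; simp [Pi.add_apply]

def IsFace (d : ℕ) (C D : Set (Fin d → ℝ)) : Prop :=
  ∃ u : (Fin d → ℝ) →ₗ[ℝ] ℝ, (∀ x ∈ C, 0 ≤ u x) ∧ D = {x ∈ C | u x = 0}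

def latticeOf (d : ℕ) (S : AddSubmonoid (Fin d → ℤ)) (D : Set (Fin d → ℝ)) :
    AddSubgroup (Fin d → ℤ) :=
  AddSubgroup.closure ((S : Set (Fin d → ℤ)) ∩ (emb d) ⁻¹' D)

def latIn (d : ℕ) (D : Set (Fin d → ℝ)) : AddSubgroup (Fin d → ℤ) :=
  AddSubgroup.comap (emb d) (Submodule.span ℝ D).toAddSubgroup

def IsRelSat (d : ℕ) (S : AddSubmonoid (Fin d → ℤ)) (C D : Set (Fin d → ℝ)) : Prop :=
  IsFace d C D ∧ D ≠ C ∧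
    latticeOf d S D =
      (⨅ D' ∈ {D' : Set (Fin d → ℝ) | IsFace d C D' ∧ D ⊂ D'}, latticeOf d S D') ⊓ latIn d D

def IsRUF (d : ℕ) (S : AddSubmonoid (Fin d → ℤ)) (C D : Set (Fin d → ℝ)) : Prop :=
  IsFace d C D ∧ ¬ IsRelSat d S C D

def Seminormal (d : ℕ) (S : AddSubmonoid (Fin d → ℤ)) (C : Set (Fin d → ℝ)) : Prop :=
  ∀ D : Set (Fin d → ℝ), IsFace d C D →
    ∀ m : Fin d → ℤ, emb d m ∈ intrinsicInterior ℝ D → (m ∈ S ↔ m ∈ latticeOf d S D)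

def coneOf (d : ℕ) (S : AddSubmonoid (Fin d → ℤ)) : Set (Fin d → ℝ) :=
  ↑(Submodule.span NNReal (emb d '' (S : Set (Fin d → ℤ))))

def pFace (d p : ℕ) (S : AddSubmonoid (Fin d → ℤ)) (D : Set (Fin d → ℝ)) : Prop :=
  p ∣ (latticeOf d S D).relIndex (latIn d D)

def Mtilde (d p : ℕ) (S : AddSubmonoid (Fin d → ℤ)) (D : Set (Fin d → ℝ)) : Set (Fin d → ℤ) :=
  {x | x ∈ latIn d D ∧ ∃ m : ℤ, IsCoprime m (p : ℤ) ∧ m • x ∈ latticeOf d S D}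

lemma latticeOf_mono (d : ℕ) (S : AddSubmonoid (Fin d → ℤ)) {D D' : Set (Fin d → ℝ)}
    (h : D ⊆ D') : latticeOf d S D ≤ latticeOf d S D' :=
  AddSubgroup.closure_mono (Set.inter_subset_inter_right _ (Set.preimage_mono h))

lemma latIn_mono (d : ℕ) {D D' : Set (Fin d → ℝ)} (h : D ⊆ D') : latIn d D ≤ latIn d D' :=
  AddSubgroup.comap_mono fun _ hx => Submodule.span_mono h hx

lemma latticeOf_le_latIn (d : ℕ) (S : AddSubmonoid (Fin d → ℤ)) (D : Set (Fin d → ℝ)) :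
    latticeOf d S D ≤ latIn d D :=
  (AddSubgroup.closure_le _).2 fun _ hx => Submodule.subset_span hx.2

lemma IsFace.subset {d : ℕ} {C D : Set (Fin d → ℝ)} (hD : IsFace d C D) : D ⊆ C := by
  obtain ⟨u, -, rfl⟩ := hD
  exact Set.sep_subset _ _

/-- A face is cut out of `C` by the kernel of its supporting functional, so any larger subset of
`C` leaves that kernel and hence the span of the face. -/
lemma IsFace.span_lt_span_of_ssubset {d : ℕ} {C D E : Set (Fin d → ℝ)} (hD : IsFace d C D)
    (hE : E ⊆ C) (h : D ⊂ E) : Submodule.span ℝ D < Submodule.span ℝ E := by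
  obtain ⟨u, -, rfl⟩ := hD
  refine lt_of_le_of_ne (Submodule.span_mono h.1) fun heq => ?_
  obtain ⟨x, hxE, hxD⟩ := Set.exists_of_ssubset h
  have hker : Submodule.span ℝ {x ∈ C | u x = 0} ≤ LinearMap.ker u :=
    Submodule.span_le.2 fun y hy => hy.2
  exact hxD ⟨hE hxE, hker (heq ▸ Submodule.subset_span hxE)⟩

lemma IsFace.finrank_span_lt_of_ssubset {d : ℕ} {C D D' : Set (Fin d → ℝ)}
    (hD : IsFace d C D) (hD' : IsFace d C D') (h : D ⊂ D') :
    Module.finrank ℝ (Submodule.span ℝ D) < Module.finrank ℝ (Submodule.span ℝ D') :=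
  Submodule.finrank_lt_finrank_of_lt (hD.span_lt_span_of_ssubset hD'.subset h)

lemma latticeOf_le_iInf_ruf_inf_latIn (d : ℕ) (S : AddSubmonoid (Fin d → ℤ))
    (C D : Set (Fin d → ℝ)) :
    latticeOf d S D ≤
      (⨅ D' ∈ {D' : Set (Fin d → ℝ) | IsRUF d S C D' ∧ D ⊆ D'}, latticeOf d S D') ⊓
        latIn d D :=
  le_inf (le_iInf₂ fun _ hD' => latticeOf_mono d S hD'.2) (latticeOf_le_latIn d S D)

/-- The inductive step: an unsaturated face occurs in its own intersection, and a relatively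
saturated one inherits the formula from the strictly larger faces. -/
lemma latticeOf_eq_iInf_ruf_inf_latIn_of_ssuperset (d : ℕ) (S : AddSubmonoid (Fin d → ℤ))
    {C D : Set (Fin d → ℝ)} (hD : IsFace d C D)
    (ih : ∀ D', IsFace d C D' → D ⊂ D' → latticeOf d S D' =
      (⨅ E ∈ {E : Set (Fin d → ℝ) | IsRUF d S C E ∧ D' ⊆ E}, latticeOf d S E) ⊓
        latIn d D') :
    latticeOf d S D =
      (⨅ D' ∈ {D' : Set (Fin d → ℝ) | IsRUF d S C D' ∧ D ⊆ D'}, latticeOf d S D') ⊓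
        latIn d D := by
  refine le_antisymm (latticeOf_le_iInf_ruf_inf_latIn d S C D) ?_
  by_cases hsat : IsRelSat d S C D
  · rw [hsat.2.2]
    refine le_inf (le_iInf₂ fun D' hD' => ?_) inf_le_right
    rw [ih D' hD'.1 hD'.2]
    exact le_inf (le_iInf₂ fun E hE => inf_le_left.trans (iInf₂_le E ⟨hE.1, hD'.2.1.trans hE.2⟩))
      (inf_le_right.trans (latIn_mono d hD'.2.1))
  · exact inf_le_left.trans (iInf₂_le D ⟨⟨hD, hsat⟩, subset_rfl⟩)

theorem stmt_6_general (d : ℕ) (S : AddSubmonoid (Fin d → ℤ))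
    (C : Set (Fin d → ℝ))
    (D : Set (Fin d → ℝ)) (hD : IsFace d C D) :
    latticeOf d S D =
      (⨅ D' ∈ {D' : Set (Fin d → ℝ) | IsRUF d S C D' ∧ D ⊆ D'}, latticeOf d S D') ⊓
        latIn d D := by
  induction hn : d - Module.finrank ℝ (Submodule.span ℝ D) using Nat.strong_induction_on
    generalizing D with
  | _ n ih =>
    refine latticeOf_eq_iInf_ruf_inf_latIn_of_ssuperset d S hD fun D' hD' hDD' => ?_
    have hlt := hD.finrank_span_lt_of_ssubset hD' hDD'
    have hle : Module.finrank ℝ (Submodule.span ℝ D') ≤ d :=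
      (Submodule.finrank_le _).trans_eq (Module.finrank_fin_fun ℝ)
    exact ih _ (by omega) D' hD' rfl

/-- For a seminormal affine monoid `S` with pointed cone `C` and any face `D` of `C`,
the lattice `M_D = ℤ(S ∩ D)` equals the intersection, over all relatively unsaturated
faces `D'` containing `D`, of `M_{D'} ∩ span(D)`. -/
theorem stmt_6 (d : ℕ) (S : AddSubmonoid (Fin d → ℤ)) (hfg : S.FG)
    (hZ : AddSubgroup.closure (S : Set (Fin d → ℤ)) = ⊤)
    (C : Set (Fin d → ℝ)) (hC : C = coneOf d S)
    (hpointed : ∀ x ∈ C, -x ∈ C → x = 0)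
    (hsn : Seminormal d S C)
    (D : Set (Fin d → ℝ)) (hD : IsFace d C D) :
    latticeOf d S D =
      (⨅ D' ∈ {D' : Set (Fin d → ℝ) | IsRUF d S C D' ∧ D ⊆ D'}, latticeOf d S D') ⊓
        latIn d D :=
  stmt_6_general d S C D hD
end
end
end

section
/- Let C be a full-dimensional pointed rational cone in M_ℝ with dual cone σ, and let ρ be an extremal ray of σ with primitive generator v_ρ. For any a ∈ (1/q)M there exists w ∈ M with ⟨w, v_ρ⟩ = -1 and ⟨w, v_{ρ'}⟩ > ⟨a, v_{ρ'}⟩ for all extremal rays ρ' ≠ ρ of σ. -/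
noncomputable section


noncomputable section

/-!
Bézout turns primitivity of `v j₀` into `w₁ ∈ ℤ^d` with `⟨w₁, v j₀⟩ = 1`. The facet condition gives a
real `x` with `⟨x, v j₀⟩ = 0` and `⟨x, v j⟩ > 0` for `j ≠ j₀`; replacing each `v j` by
`c • v j - ⟨v j₀, v j⟩ • v j₀` with `c = ⟨v j₀, v j₀⟩` keeps these inequalities and makes them cut
out an open cone, in which rounding a large multiple of `x` gives an integer point. Mapping it by
`y ↦ c • y - ⟨y, v j₀⟩ • v j₀` yields `y ∈ ℤ^d` with `⟨y, v j₀⟩ = 0` and `⟨y, v j⟩ > 0` for `j ≠ j₀`,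
and `w = -w₁ + N • y` works for all large `N`.
-/

open Finset Filter Matrix

lemma Finset.gcd_eq_one_of_gcd_natAbs_eq_one {ι : Type*} {s : Finset ι} {f : ι → ℤ}
    (h : s.gcd (fun i => (f i).natAbs) = 1) : s.gcd f = 1 := by
  have hdvd : (s.gcd f).natAbs = 1 := Nat.dvd_one.mp <|
    h ▸ Finset.dvd_gcd fun i hi => Int.natAbs_dvd_natAbs.mpr (Finset.gcd_dvd hi)
  have hnonneg : 0 ≤ s.gcd f := Int.nonneg_of_normalize_eq_self Finset.normalize_gcd
  omega

lemma exists_dotProduct_eq_one_of_gcd_natAbs_eq_one {ι : Type*} [Fintype ι] {f : ι → ℤ}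
    (h : univ.gcd (fun i => (f i).natAbs) = 1) : ∃ w : ι → ℤ, w ⬝ᵥ f = 1 := by
  obtain ⟨g, hg⟩ := Finset.gcd_eq_sum_mul univ f
  exact ⟨g, by rw [dotProduct_comm, dotProduct, ← hg, Finset.gcd_eq_one_of_gcd_natAbs_eq_one h]⟩

lemma exists_intCast_mem_of_isOpen_of_smul_mem {ι : Type*} [Fintype ι] {U : Set (ι → ℝ)}
    (hU : IsOpen U) (hsmul : ∀ z ∈ U, ∀ t : ℝ, 0 < t → t • z ∈ U) {x : ι → ℝ} (hx : x ∈ U) :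
    ∃ y : ι → ℤ, (fun i => (y i : ℝ)) ∈ U := by
  obtain ⟨ε, hε, hball⟩ := Metric.isOpen_iff.mp hU x hx
  obtain ⟨n, hn⟩ := exists_nat_gt ε⁻¹
  have hn₀ : (0 : ℝ) < n := (inv_pos.mpr hε).trans hn
  refine ⟨fun i => round (n * x i), ?_⟩
  have hnear : (n : ℝ)⁻¹ • (fun i => (round (n * x i) : ℝ)) ∈ U := by
    refine hball ((dist_pi_lt_iff hε).mpr fun i => ?_)
    have hround := abs_sub_round (n * x i)
    have hscale : (n : ℝ)⁻¹ * round (n * x i) - x i = (n : ℝ)⁻¹ * (round (n * x i) - n * x i) := by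
      field_simp
    calc dist ((n : ℝ)⁻¹ * round (n * x i)) (x i)
        = (n : ℝ)⁻¹ * |n * x i - round (n * x i)| := by
          rw [Real.dist_eq, hscale, abs_mul, abs_of_pos (inv_pos.mpr hn₀), abs_sub_comm]
      _ ≤ (n : ℝ)⁻¹ * (1 / 2) := by gcongr
      _ < ε := by
          have := inv_lt_of_inv_lt₀ hε hn
          linarith [inv_pos.mpr hn₀]
  simpa [smul_smul, hn₀.ne'] using hsmul _ hnear n hn₀

lemma exists_int_forall_dotProduct_pos {ι κ : Type*} [Finite ι] [Fintype κ] (u : ι → κ → ℤ)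
    {x : κ → ℝ} (hx : ∀ j, 0 < x ⬝ᵥ fun i => (u j i : ℝ)) :
    ∃ y : κ → ℤ, ∀ j, 0 < y ⬝ᵥ u j := by
  have hopen : IsOpen {z : κ → ℝ | ∀ j, 0 < z ⬝ᵥ fun i => (u j i : ℝ)} := by
    simp only [Set.ofPred_forall]
    exact isOpen_iInter_of_finite fun j => isOpen_lt continuous_const (by fun_prop)
  obtain ⟨y, hy⟩ := exists_intCast_mem_of_isOpen_of_smul_mem hopen
    (fun z hz t ht j => by simpa [smul_dotProduct] using mul_pos ht (hz j)) hx
  refine ⟨y, fun j => ?_⟩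
  have := hy j
  simp only [dotProduct] at this ⊢
  exact_mod_cast this

lemma exists_int_dotProduct_eq_zero_forall_pos {ι κ : Type*} [Finite ι] [Fintype κ]
    {v₀ : κ → ℤ} (hv₀ : v₀ ≠ 0) (u : ι → κ → ℤ) {x : κ → ℝ}
    (hx₀ : (x ⬝ᵥ fun i => (v₀ i : ℝ)) = 0) (hx : ∀ j, 0 < x ⬝ᵥ fun i => (u j i : ℝ)) :
    ∃ y : κ → ℤ, y ⬝ᵥ v₀ = 0 ∧ ∀ j, 0 < y ⬝ᵥ u j := by
  set c := v₀ ⬝ᵥ v₀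
  have hc : 0 < c := lt_of_le_of_ne (sum_nonneg fun i _ => mul_self_nonneg (v₀ i))
    (Ne.symm (dotProduct_self_eq_zero.not.mpr hv₀))
  obtain ⟨y, hy⟩ := exists_int_forall_dotProduct_pos (fun j => c • u j - (v₀ ⬝ᵥ u j) • v₀)
    (x := x) fun j => by
      have hcast : (fun i => ((c • u j - (v₀ ⬝ᵥ u j) • v₀) i : ℝ)) =
          (c : ℝ) • (fun i => (u j i : ℝ)) - ((v₀ ⬝ᵥ u j : ℤ) : ℝ) • fun i => (v₀ i : ℝ) := by
        ext i; simp
      rw [hcast, dotProduct_sub, dotProduct_smul, dotProduct_smul, hx₀, smul_zero, sub_zero,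
        smul_eq_mul]
      exact mul_pos (Int.cast_pos.mpr hc) (hx j)
  refine ⟨c • y - (y ⬝ᵥ v₀) • v₀, ?_, fun j => ?_⟩
  · simp only [sub_dotProduct, smul_dotProduct, smul_eq_mul]; ring
  · convert hy j using 1
    simp only [sub_dotProduct, dotProduct_sub, smul_dotProduct, dotProduct_smul, smul_eq_mul]
    rw [dotProduct_comm v₀ (u j)]; ring

/-- `a ∈ (1/q)ℤ^d` is encoded by its numerator vector, so the inequality is multiplied by `q`. -/
theorem stmt_10_general (d m : ℕ) (v : Fin m → Fin d → ℤ)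
    (hprim : ∀ j, Finset.univ.gcd (fun i => (v j i).natAbs) = 1)
    (C : Set (Fin d → ℝ))
    (hfacet : ∀ j, ∃ x ∈ C, (∑ i, x i * (v j i : ℝ)) = 0 ∧
      ∀ j', j' ≠ j → 0 < ∑ i, x i * (v j' i : ℝ))
    (q : ℕ) (hq : 0 < q) (a : Fin d → ℤ) (j₀ : Fin m) :
    ∃ w : Fin d → ℤ, (∑ i, w i * v j₀ i) = -1 ∧
      ∀ j, j ≠ j₀ → (∑ i, a i * v j i) < (q : ℤ) * ∑ i, w i * v j i := by
  obtain ⟨x, -, hx₀, hx⟩ := hfacet j₀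
  obtain ⟨w₁, hw₁⟩ := exists_dotProduct_eq_one_of_gcd_natAbs_eq_one (hprim j₀)
  have hv₀ : v j₀ ≠ 0 := fun h => by simp [h] at hw₁
  obtain ⟨y, hy₀, hy⟩ := exists_int_dotProduct_eq_zero_forall_pos hv₀
    (fun j : {j // j ≠ j₀} => v j) hx₀ fun j => hx j j.2
  obtain ⟨N, hN₀, hN⟩ := ((eventually_gt_atTop 0).and (eventually_all.mpr
    fun j : Fin m => eventually_gt_atTop (a ⬝ᵥ v j + q * (w₁ ⬝ᵥ v j)))).exists
  refine ⟨-w₁ + N • y, ?_, fun j hj => ?_⟩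
  · change (-w₁ + N • y) ⬝ᵥ v j₀ = -1
    simp only [add_dotProduct, neg_dotProduct, smul_dotProduct, hw₁, hy₀, smul_zero, add_zero]
  · change a ⬝ᵥ v j < q * ((-w₁ + N • y) ⬝ᵥ v j)
    have hqy : 1 ≤ (q : ℤ) * (y ⬝ᵥ v j) :=
      one_le_mul_of_one_le_of_one_le (by exact_mod_cast hq) (hy ⟨j, hj⟩)
    simp only [add_dotProduct, neg_dotProduct, smul_dotProduct, smul_eq_mul]
    nlinarith [hN j, mul_le_mul_of_nonneg_left hqy hN₀.le]

/-- Claim (†): let `C ⊂ ℝ^d` be a full-dimensional pointed rational cone cut out by the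
primitive generators `v j` of the extremal rays of its dual cone.  For any positive
integer `q`, any `a ∈ (1/q)ℤ^d` (encoded by its numerator vector), and any fixed ray
index `j₀`, there is `w ∈ ℤ^d` with `⟨w, v j₀⟩ = -1` and `⟨w, v j⟩ > ⟨a/q, v j⟩` for
all `j ≠ j₀`. -/
theorem stmt_10 (d m : ℕ) (v : Fin m → Fin d → ℤ)
    (hprim : ∀ j, Finset.univ.gcd (fun i => (v j i).natAbs) = 1)
    (C : Set (Fin d → ℝ))
    (hC : C = {x : Fin d → ℝ | ∀ j, 0 ≤ ∑ i, x i * (v j i : ℝ)})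
    (hfulldim : Submodule.span ℝ C = ⊤)
    (hpointed : ∀ x ∈ C, -x ∈ C → x = 0)
    (hfacet : ∀ j, ∃ x ∈ C, (∑ i, x i * (v j i : ℝ)) = 0 ∧
      ∀ j', j' ≠ j → 0 < ∑ i, x i * (v j' i : ℝ))
    (q : ℕ) (hq : 0 < q) (a : Fin d → ℤ) (j₀ : Fin m) :
    ∃ w : Fin d → ℤ, (∑ i, w i * v j₀ i) = -1 ∧
      ∀ j, j ≠ j₀ → (∑ i, a i * v j i) < (q : ℤ) * ∑ i, w i * v j i :=
  stmt_10_general d m v hprim C hfacet q hq a j₀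
end
end
end

section
/- Let S be a seminormal affine monoid with monoid algebra R = k[S] over a perfect field k of characteristic p, with normalization R̄ = k[S̄]. Every homomorphism π_a ∈ Hom_R(F^e_* R, R) extends (uniquely) to a homomorphism F^e_* R̄ → R̄; equivalently, if (a + (1/q)S) ∩ M ⊆ S then ⟨a, v_ρ⟩ > -1 for all primitive extremal ray generators v_ρ of the dual cone σ. -/
/-!
Seminormality at the face `C` itself puts every lattice point of the interior of `C` into `S`.
Since `v_ρ` is primitive and the facet `ρ` contains a lattice point interior to all other facets,
for `a ∈ (1/q)M` there is `s ∈ int C ∩ M` with `a + s/q ∈ M` and `0 < ⟨s, v_ρ⟩ ≤ q`. If `π_a` is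
`R`-linear then `a + s/q ∈ S`, so `⟨a, v_ρ⟩ ≥ -1`. Applied to `π_a ∘ F^e_* π_a = π_{(1 + 1/q)a}`
this bound gives `⟨a, v_ρ⟩ ≥ -q/(q + 1) > -1`.
-/
noncomputable section


noncomputable section

open Finset

/-- `π_a ∈ Hom_R(F^e_* R, R)`, with `a ∈ (1/q)M` encoded by its numerator vector. -/
def IsHomPi {ι : Type*} (S : AddSubmonoid (ι → ℤ)) (q : ℤ) (a : ι → ℤ) : Prop :=
  ∀ s ∈ S, (∀ i, q ∣ a i + s i) → (fun i => (a i + s i) / q) ∈ S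

theorem isHomPi_iff {ι : Type*} {S : AddSubmonoid (ι → ℤ)} {q : ℤ} (hq : q ≠ 0) {a : ι → ℤ} :
    IsHomPi S q a ↔ ∀ s ∈ S, ∀ w, a + s = q • w → w ∈ S := by
  refine ⟨fun h s hs w hw => ?_, fun h s hs hdvd => ?_⟩
  · have hw' (i : ι) : a i + s i = q * w i := congrFun hw i
    convert h s hs fun i => ⟨w i, hw' i⟩ using 1
    funext i
    rw [hw' i, Int.mul_ediv_cancel_left _ hq]
  · refine h s hs _ (funext fun i => ?_)
    exact (Int.mul_ediv_cancel' (hdvd i)).symm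

/-- The composite `π_a ∘ F^e_* π_a` is `π_{(1 + 1/q) a}`. -/
theorem IsHomPi.comp {ι : Type*} {S : AddSubmonoid (ι → ℤ)} {q : ℤ} (hq : q ≠ 0) {a : ι → ℤ}
    (h : IsHomPi S q a) : IsHomPi S (q ^ 2) ((1 + q) • a) := by
  rw [isHomPi_iff hq] at h
  rw [isHomPi_iff (pow_ne_zero 2 hq)]
  intro s hs r hr
  have ht : q • r - a ∈ S := h s hs _ <| by
    rw [smul_sub, ← smul_assoc, smul_eq_mul, ← sq, ← hr]
    module
  exact h _ ht r (by abel)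

theorem exists_dotProduct_eq_one_of_gcd_eq_one {ι : Type*} [Fintype ι] (v : ι → ℤ)
    (h : univ.gcd (fun i => (v i).natAbs) = 1) : ∃ g : ι → ℤ, g ⬝ᵥ v = 1 := by
  obtain ⟨g, hg⟩ := gcd_eq_sum_mul univ v
  have hgcd : univ.gcd v = 1 := by
    have habs : (univ.gcd v).natAbs = 1 := Nat.dvd_one.mp <| h ▸
      dvd_gcd fun i hi => Int.natAbs_dvd_natAbs.mpr (gcd_dvd hi)
    have hnonneg : 0 ≤ univ.gcd v := Int.nonneg_of_normalize_eq_self Finset.normalize_gcd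
    omega
  exact ⟨g, by rw [dotProduct_comm, ← hgcd, hg]; rfl⟩

theorem exists_add_smul_dotProduct_le {ι κ : Type*} [Fintype ι] [Finite κ] {v : κ → ι → ℤ}
    {j : κ} {g z : ι → ℤ} (hg : g ⬝ᵥ v j = 1) (hz : z ⬝ᵥ v j = 0)
    (hzpos : ∀ j', j' ≠ j → 0 < z ⬝ᵥ v j') (b : ι → ℤ) {N : ℤ} (hN : 0 < N) :
    ∃ w : ι → ℤ, (b + N • w) ⬝ᵥ v j ≤ N ∧ ∀ j', 0 < (b + N • w) ⬝ᵥ v j' := by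
  set c := -((b ⬝ᵥ v j - 1) / N)
  obtain ⟨k, hk⟩ := Finite.exists_le fun j' => max 0 (1 - (b ⬝ᵥ v j' + N * c * (g ⬝ᵥ v j')))
  have hpair (j' : κ) : (b + N • (c • g + k • z)) ⬝ᵥ v j' =
      b ⬝ᵥ v j' + N * c * (g ⬝ᵥ v j') + N * k * (z ⬝ᵥ v j') := by
    simp only [add_dotProduct, smul_dotProduct, smul_eq_mul]
    ring
  have hj : (b + N • (c • g + k • z)) ⬝ᵥ v j = (b ⬝ᵥ v j - 1) % N + 1 := by
    rw [hpair, hg, hz]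
    linarith [Int.mul_ediv_add_emod (b ⬝ᵥ v j - 1) N]
  refine ⟨c • g + k • z, ?_, fun j' => ?_⟩
  · linarith [Int.emod_lt_of_pos (b ⬝ᵥ v j - 1) hN]
  by_cases hj' : j' = j
  · subst hj'
    linarith [Int.emod_nonneg (b ⬝ᵥ v j' - 1) hN.ne']
  · have hk' := max_le_iff.mp (hk j')
    have hNz : 1 ≤ N * (z ⬝ᵥ v j') := one_le_mul_of_one_le_of_one_le hN (hzpos j' hj')
    rw [hpair]
    nlinarith

section Cone

variable {d m : ℕ} {S : AddSubmonoid (Fin d → ℤ)} {v : Fin m → Fin d → ℤ}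

theorem isFace_self (C : Set (Fin d → ℝ)) : IsFace d C C :=
  ⟨0, fun _ _ => le_rfl, by simp⟩

theorem emb_dotProduct (w u : Fin d → ℤ) :
    (emb d w ⬝ᵥ fun i => (u i : ℝ)) = ((w ⬝ᵥ u : ℤ) : ℝ) := by
  simp [dotProduct, emb]

theorem emb_mem_coneOf {w : Fin d → ℤ} (hw : w ∈ S) : emb d w ∈ coneOf d S :=
  Submodule.subset_span (Set.mem_image_of_mem _ hw)

theorem dotProduct_nonneg_of_mem (hdual : coneOf d S = {x | ∀ j, 0 ≤ ∑ i, x i * (v j i : ℝ)})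
    {w : Fin d → ℤ} (hw : w ∈ S) (j : Fin m) : 0 ≤ w ⬝ᵥ v j := by
  have h : 0 ≤ emb d w ⬝ᵥ fun i => (v j i : ℝ) := (hdual ▸ emb_mem_coneOf hw :) j
  exact_mod_cast emb_dotProduct w (v j) ▸ h

theorem mem_of_forall_dotProduct_pos (hZ : AddSubgroup.closure (S : Set (Fin d → ℤ)) = ⊤)
    (hsn : Seminormal d S (coneOf d S))
    (hdual : coneOf d S = {x | ∀ j, 0 ≤ ∑ i, x i * (v j i : ℝ)})
    {w : Fin d → ℤ} (hw : ∀ j, 0 < w ⬝ᵥ v j) : w ∈ S := by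
  have hopen : IsOpen {x : Fin d → ℝ | ∀ j, 0 < ∑ i, x i * (v j i : ℝ)} := by
    simp only [Set.ofPred_forall]
    exact isOpen_iInter_of_finite fun j => isOpen_lt continuous_const (by fun_prop)
  have hint : emb d w ∈ interior (coneOf d S) :=
    interior_maximal (hdual ▸ fun x hx j => (hx j).le) hopen fun j => by
      change 0 < emb d w ⬝ᵥ _
      rw [emb_dotProduct]
      exact_mod_cast hw j
  have hlat : latticeOf d S (coneOf d S) = ⊤ := by
    have hS : (S : Set (Fin d → ℤ)) ⊆ emb d ⁻¹' coneOf d S := fun _ => emb_mem_coneOf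
    rw [latticeOf, Set.inter_eq_left.mpr hS, hZ]
  exact (hsn _ (isFace_self _) w (interior_subset_intrinsicInterior hint)).mpr (hlat ▸ trivial)

theorem exists_dotProduct_eq_zero_and_pos
    (hdual : coneOf d S = {x | ∀ j, 0 ≤ ∑ i, x i * (v j i : ℝ)}) {j : Fin m}
    (hfacet : ∃ x ∈ coneOf d S, (∑ i, x i * (v j i : ℝ)) = 0 ∧
      ∀ j', j' ≠ j → 0 < ∑ i, x i * (v j' i : ℝ)) :
    ∃ z : Fin d → ℤ, z ⬝ᵥ v j = 0 ∧ ∀ j', j' ≠ j → 0 < z ⬝ᵥ v j' := by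
  obtain ⟨x, hx, hxj, hxpos⟩ := hfacet
  obtain ⟨l, hlS, rfl⟩ := (Finsupp.mem_span_image_iff_linearCombination NNReal).mp hx
  have hpair (u : Fin d → ℤ) : (Finsupp.linearCombination NNReal (emb d) l ⬝ᵥ fun i => (u i : ℝ))
      = ∑ t ∈ l.support, (l t : ℝ) * ((t ⬝ᵥ u : ℤ) : ℝ) := by
    rw [Finsupp.linearCombination_apply, Finsupp.sum, sum_dotProduct]
    refine sum_congr rfl fun t _ => ?_
    rw [smul_dotProduct, emb_dotProduct, NNReal.smul_def, smul_eq_mul]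
  have hterm_nonneg (j' : Fin m) : ∀ t ∈ l.support, 0 ≤ (l t : ℝ) * ((t ⬝ᵥ v j' : ℤ) : ℝ) :=
    fun t ht => mul_nonneg (l t).2 (by exact_mod_cast dotProduct_nonneg_of_mem hdual (hlS ht) j')
  refine ⟨∑ t ∈ l.support, t, ?_, fun j' hj' => ?_⟩
  · rw [sum_dotProduct]
    refine sum_eq_zero fun t ht => ?_
    have h0 := (sum_eq_zero_iff_of_nonneg (hterm_nonneg j)).mp ((hpair (v j)).symm.trans hxj) t ht
    have hlt : (l t : ℝ) ≠ 0 := by exact_mod_cast Finsupp.mem_support_iff.mp ht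
    exact_mod_cast (mul_eq_zero.mp h0).resolve_left hlt
  · rw [sum_dotProduct]
    have hsum : ∑ t ∈ l.support, (0 : ℝ) < ∑ t ∈ l.support, (l t : ℝ) * ((t ⬝ᵥ v j' : ℤ) : ℝ) := by
      rw [sum_const_zero, ← hpair]
      exact hxpos j' hj'
    obtain ⟨t, ht, htpos⟩ := exists_lt_of_sum_lt hsum
    have htpos' : 0 < t ⬝ᵥ v j' := by exact_mod_cast pos_of_mul_pos_right htpos (l t).2
    exact htpos'.trans_le <| single_le_sum
      (fun t ht => dotProduct_nonneg_of_mem hdual (hlS ht) j') ht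

theorem neg_le_dotProduct_of_isHomPi (hZ : AddSubgroup.closure (S : Set (Fin d → ℤ)) = ⊤)
    (hsn : Seminormal d S (coneOf d S))
    (hdual : coneOf d S = {x | ∀ j, 0 ≤ ∑ i, x i * (v j i : ℝ)}) {j : Fin m}
    (hprim : univ.gcd (fun i => (v j i).natAbs) = 1)
    (hfacet : ∃ x ∈ coneOf d S, (∑ i, x i * (v j i : ℝ)) = 0 ∧
      ∀ j', j' ≠ j → 0 < ∑ i, x i * (v j' i : ℝ))
    {N : ℤ} (hN : 0 < N) {a : Fin d → ℤ} (ha : IsHomPi S N a) : -N ≤ a ⬝ᵥ v j := by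
  obtain ⟨g, hg⟩ := exists_dotProduct_eq_one_of_gcd_eq_one _ hprim
  obtain ⟨z, hz, hzpos⟩ := exists_dotProduct_eq_zero_and_pos hdual hfacet
  obtain ⟨w, hwN, hwpos⟩ := exists_add_smul_dotProduct_le hg hz hzpos (-a) hN
  have hs : -a + N • w ∈ S := mem_of_forall_dotProduct_pos hZ hsn hdual hwpos
  have hw : w ∈ S := (isHomPi_iff hN.ne').mp ha _ hs w (by abel)
  have hwj := mul_nonneg hN.le (dotProduct_nonneg_of_mem hdual hw j)
  simp only [add_dotProduct, neg_dotProduct, smul_dotProduct, smul_eq_mul] at hwN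
  linarith

end Cone

theorem stmt_11_general (d m : ℕ) (p : ℕ) (hp : p.Prime) (e : ℕ) (q : ℕ) (hq : q = p ^ e)
    (S : AddSubmonoid (Fin d → ℤ))
    (hZ : AddSubgroup.closure (S : Set (Fin d → ℤ)) = ⊤)
    (C : Set (Fin d → ℝ)) (hC : C = coneOf d S)
    (hsn : Seminormal d S C)
    (v : Fin m → Fin d → ℤ)
    (hprim : ∀ j, Finset.univ.gcd (fun i => (v j i).natAbs) = 1)
    (hdual : C = {x : Fin d → ℝ | ∀ j, 0 ≤ ∑ i, x i * (v j i : ℝ)})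
    (hfacet : ∀ j, ∃ x ∈ C, (∑ i, x i * (v j i : ℝ)) = 0 ∧
      ∀ j', j' ≠ j → 0 < ∑ i, x i * (v j' i : ℝ))
    (a : Fin d → ℤ)
    (hhom : ∀ s ∈ S, (∀ i, (q : ℤ) ∣ a i + s i) →
      (fun i => (a i + s i) / (q : ℤ)) ∈ S) :
    ∀ j, -(q : ℤ) < ∑ i, a i * v j i := by
  subst hC
  intro j
  have hq0 : 0 < (q : ℤ) := by
    rw [hq]
    exact_mod_cast pow_pos hp.pos e
  have h := neg_le_dotProduct_of_isHomPi hZ hsn hdual (hprim j) (hfacet j) (pow_pos hq0 2)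
    (IsHomPi.comp hq0.ne' hhom)
  rw [smul_dotProduct, smul_eq_mul] at h
  change -(q : ℤ) < a ⬝ᵥ v j
  nlinarith

/-- Every `π_a ∈ Hom_R(F^e_* R, R)` for a seminormal monoid algebra `R = k[S]` extends
to the normalization: if `(a + (1/q)S) ∩ M ⊆ S` (with `q = p^e` and `a ∈ (1/q)ℤ^d`
encoded by its numerator vector), then `⟨a/q, v j⟩ > -1`, i.e. `⟨a, v j⟩ > -q`, for
every primitive extremal-ray generator `v j` of the dual cone of `C = ℝ_{≥0}S`. -/
theorem stmt_11 (d m : ℕ) (p : ℕ) (hp : p.Prime) (e : ℕ) (q : ℕ) (hq : q = p ^ e)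
    (S : AddSubmonoid (Fin d → ℤ)) (hfg : S.FG)
    (hZ : AddSubgroup.closure (S : Set (Fin d → ℤ)) = ⊤)
    (C : Set (Fin d → ℝ)) (hC : C = coneOf d S)
    (hpointed : ∀ x ∈ C, -x ∈ C → x = 0)
    (hsn : Seminormal d S C)
    (v : Fin m → Fin d → ℤ)
    (hprim : ∀ j, Finset.univ.gcd (fun i => (v j i).natAbs) = 1)
    (hdual : C = {x : Fin d → ℝ | ∀ j, 0 ≤ ∑ i, x i * (v j i : ℝ)})
    (hfacet : ∀ j, ∃ x ∈ C, (∑ i, x i * (v j i : ℝ)) = 0 ∧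
      ∀ j', j' ≠ j → 0 < ∑ i, x i * (v j' i : ℝ))
    (a : Fin d → ℤ)
    (hhom : ∀ s ∈ S, (∀ i, (q : ℤ) ∣ a i + s i) →
      (fun i => (a i + s i) / (q : ℤ)) ∈ S) :
    ∀ j, -(q : ℤ) < ∑ i, a i * v j i :=
  stmt_11_general d m p hp e q hq S hZ C hC hsn v hprim hdual hfacet a hhom
end
end
end
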